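/- Let A = {a} be a singleton set and let R^𝔄 = A^k and R^𝔅 = ∅ be two interpretations of a k-ary relation symbol R over A. For every term T built from R using the operators p (cyclic permutation), s (swap of last two coordinates), I (identification), ¬ (complementation relative to A^n), and ∃ (projection), the interpretation of T in 𝔄 is empty if and only if the interpretation of ¬T in 𝔅 is empty. Consequently, every such term is satisfiable in 𝔄 or in 𝔅. -/

import Mathlib

/-- The unary operators of the algebra. -/
inductive Op : Type
  | p | s | i | neg | ex
deriving DecidableEq

/-- Permutation of `Fin n` swapping the last two coordinates (identity for `n ≤ 1`). -/
def swapLast (n : ℕ) : Equiv.Perm (Fin n) :=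
  if h : 2 ≤ n then Equiv.swap ⟨n - 1, by omega⟩ ⟨n - 2, by omega⟩ else 1

/-- Action of an operator on a relation (of some arity `n`) over `A`:
`p` moves the last coordinate to the front, `s` swaps the last two coordinates,
`neg` complements within `A^n`, `ex` projects away the last coordinate, and `i`
keeps tuples with equal last two coordinates and drops the last one; `p`, `s`,
`i` are the identity on arity `≤ 1` and `ex` the identity on arity `0`. -/
def applyOp (A : Type) : Op → (Σ n, Set (Fin n → A)) → (Σ n, Set (Fin n → A))
  | Op.p, ⟨n, R⟩ => ⟨n, {t | t ∘ (finRotate n) ∈ R}⟩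
  | Op.s, ⟨n, R⟩ => ⟨n, {t | t ∘ (swapLast n) ∈ R}⟩
  | Op.neg, ⟨n, R⟩ => ⟨n, Rᶜ⟩
  | Op.ex, ⟨0, R⟩ => ⟨0, R⟩
  | Op.ex, ⟨m + 1, R⟩ => ⟨m, {t | ∃ a : A, Fin.snoc t a ∈ R}⟩
  | Op.i, ⟨0, R⟩ => ⟨0, R⟩
  | Op.i, ⟨1, R⟩ => ⟨1, R⟩
  | Op.i, ⟨m + 2, R⟩ => ⟨m + 1, {t | Fin.snoc t (t (Fin.last m)) ∈ R}⟩

/-- Interpretation of a string of operators (head outermost) applied to a base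
`k`-ary relation. -/
def interpOps (A : Type) (k : ℕ) (base : Set (Fin k → A)) :
    List Op → Σ n, Set (Fin n → A)
  | [] => ⟨k, base⟩
  | op :: ops => applyOp A op (interpOps A k base ops)

/-- The binary identity relation `e` over `M`. -/
def eRel (M : Type) : Set (Fin 2 → M) := {t | t 0 = t 1}

/-
Over a one-element domain, complementation commutes with every operator: for `p`, `s`, `I` and
`¬` this holds over any domain, and for `∃` it is the fact that `∃ b, P b ↔ P a` when `a` is the
only element. Since the full relation is the complement of the empty one, the interpretation of
a term in `𝔄` is therefore the interpretation of its negation in `𝔅`.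
-/

theorem applyOp_neg_comm (A : Type) [Unique A] (op : Op) (R : Σ n, Set (Fin n → A)) :
    applyOp A op (applyOp A Op.neg R) = applyOp A Op.neg (applyOp A op R) := by
  obtain ⟨n, R⟩ := R
  cases op with
  | p | s | neg => rfl
  | i => match n with
    | 0 | 1 | _ + 2 => rfl
  | ex => match n with
    | 0 => rfl
    | m + 1 =>
      refine congrArg (Sigma.mk m) (Set.ext fun t => ?_)
      show (∃ b, Fin.snoc t b ∉ R) ↔ ¬∃ b, Fin.snoc t b ∈ R
      rw [Unique.exists_iff, Unique.exists_iff]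

theorem interpOps_univ_eq_neg (A : Type) [Unique A] (k : ℕ) (ops : List Op) :
    interpOps A k Set.univ ops = interpOps A k ∅ (Op.neg :: ops) := by
  induction ops with
  | nil => exact congrArg (Sigma.mk k) Set.compl_empty.symm
  | cons op ops ih => rw [interpOps, ih]; exact applyOp_neg_comm A op _

/-- Over a singleton domain `A = {a}`, with `R` interpreted as full in `𝔄` and
empty in `𝔅`: for every term built from `R` using `p, s, I, ¬, ∃`, its
interpretation in `𝔄` is empty iff the interpretation of its negation in `𝔅`
is empty; consequently every such term is satisfiable in `𝔄` or in `𝔅`. -/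
theorem singleton_duality (A : Type) (a : A) (ha : ∀ x : A, x = a)
    (k : ℕ) (ops : List Op) :
    ((interpOps A k Set.univ ops).2 = ∅ ↔
      (interpOps A k (∅ : Set (Fin k → A)) (Op.neg :: ops)).2 = ∅) ∧
    ((interpOps A k Set.univ ops).2.Nonempty ∨
      (interpOps A k (∅ : Set (Fin k → A)) ops).2.Nonempty) := by
  let : Unique A := { default := a, uniq := ha }
  rw [interpOps_univ_eq_neg]
  refine ⟨Iff.rfl, ?_⟩
  rw [interpOps]
  obtain ⟨n, R⟩ := interpOps A k (∅ : Set (Fin k → A)) ops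
  rcases R.eq_empty_or_nonempty with rfl | hR
  · exact Or.inl (by simp [applyOp])
  · exact Or.inr hR
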